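/- Fix an integer k ≥ 1 and let φ_k^min = arccos(1 − (2 − 2cos(π/(2k+1)))/(1 − cos(π/(2k−1)))). If φ₁, φ₂ are phases with φ_k^min < φ₂ < φ₁ ≤ π, then there exists λ with λ_{k,1}^{φ₁,max} < λ < λ_{k,1}^{φ₂,max} such that P_k^{φ₁}(λ) = P_k^{φ₂}(λ), where λ_{k,1}^{φ,max} = (1 − cos(π/(2k+1)))/(1 − cos φ). -/

import Mathlib

/-!
With `δ = arccos (1 - λ(1 - cos φ))` one has
`1 - P_k^φ(λ) = (1 - λ)(1 + cos((2k+1)δ)) / (1 + cos δ)`, so for `0 < λ < 1` the success probability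
equals `1` when `(2k+1)δ` is an odd multiple of `π` and is `< 1` otherwise.
At `λ = λ_{k,1}^{φ,max}` the angle is `δ = π/(2k+1)`, so `P_k^{φ₁} = 1` at the left endpoint and
`P_k^{φ₂} = 1` at the right one. At the opposite endpoints the angle of the other phase lies in
`(0, π/(2k+1))`, resp. in `(π/(2k+1), π/(2k-1))`, the upper bound being what `φ₂ > φ_k^min`
guarantees. So `(2k+1)δ ∈ [0, 3π) \ {π}`, the other probability is `< 1` there, and the intermediate
value theorem applied to `P_k^{φ₁} - P_k^{φ₂}` gives the crossing point.
-/

/-- The success probability `P_k^φ(λ)` of the matched-phase Grover algorithm after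
`k` iterations: `P_k^φ(λ) = A·cos((2k+1)δ) + B` where `θ = arcsin √λ`,
`δ = arccos (1 − λ(1 − cos φ))`, `A = (sin²θ/sin²δ)(cos φ − cos δ)` and
`B = (sin²θ/sin²δ)(1 − cos φ·cos δ)`. -/
noncomputable def grovP (k : ℕ) (φ lam : ℝ) : ℝ :=
  let θ : ℝ := Real.arcsin (Real.sqrt lam)
  let δ : ℝ := Real.arccos (1 - lam * (1 - Real.cos φ))
  let A : ℝ := Real.sin θ ^ 2 / Real.sin δ ^ 2 * (Real.cos φ - Real.cos δ)
  let B : ℝ := Real.sin θ ^ 2 / Real.sin δ ^ 2 * (1 - Real.cos φ * Real.cos δ)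
  A * Real.cos ((2 * (k : ℝ) + 1) * δ) + B

/-- `φ_k^min = arccos(1 − (2 − 2cos(π/(2k+1)))/(1 − cos(π/(2k−1))))`. -/
noncomputable def phiMin (k : ℕ) : ℝ :=
  Real.arccos (1 - (2 - 2 * Real.cos (Real.pi / (2 * (k : ℝ) + 1))) /
    (1 - Real.cos (Real.pi / (2 * (k : ℝ) - 1))))

open Real Set

noncomputable def grovDelta (φ lam : ℝ) : ℝ :=
  arccos (1 - lam * (1 - cos φ))

noncomputable def lamMax (k : ℕ) (φ : ℝ) : ℝ :=
  (1 - cos (π / (2 * (k : ℝ) + 1))) / (1 - cos φ)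

lemma neg_one_lt_cos_of_ne_pi {t : ℝ} (h0 : 0 ≤ t) (h3 : t < 3 * π) (hπ : t ≠ π) :
    -1 < cos t := by
  refine (neg_one_le_cos t).lt_of_ne fun h => hπ ?_
  obtain ⟨n, hn⟩ := cos_eq_neg_one_iff.mp h.symm
  have hn0 : n = 0 := by
    have hlo : (-1 : ℝ) < n := by nlinarith [pi_pos]
    have hhi : (n : ℝ) < 1 := by nlinarith [pi_pos]
    have : -1 < n := by exact_mod_cast hlo
    have : n < 1 := by exact_mod_cast hhi
    omega
  simpa [hn0] using hn.symm

lemma cos_lt_of_arccos_lt {x φ : ℝ} (hφ : φ ≤ π) (h : arccos x < φ) : cos φ < x := by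
  by_contra! hx
  have := arccos_le_arccos hx
  rw [arccos_cos ((arccos_nonneg x).trans h.le) hφ] at this
  linarith

lemma mul_one_sub_cos_lt_two (φ : ℝ) {lam : ℝ} (h0 : 0 ≤ lam) (h1 : lam < 1) :
    lam * (1 - cos φ) < 2 := by
  nlinarith [neg_one_le_cos φ]

section Angles

variable (k : ℕ)

lemma pi_div_two_mul_add_one_pos : 0 < π / (2 * (k : ℝ) + 1) := by positivity

lemma pi_div_two_mul_add_one_le_pi : π / (2 * (k : ℝ) + 1) ≤ π :=
  div_le_self pi_pos.le (by linarith [k.cast_nonneg (α := ℝ)])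

lemma cos_pi_div_two_mul_add_one_lt_one : cos (π / (2 * (k : ℝ) + 1)) < 1 := by
  simpa using cos_lt_cos_of_nonneg_of_le_pi le_rfl (pi_div_two_mul_add_one_le_pi k)
    (pi_div_two_mul_add_one_pos k)

variable {k}

lemma pi_div_two_mul_sub_one_pos (hk : 1 ≤ k) : 0 < π / (2 * (k : ℝ) - 1) := by
  have : (1 : ℝ) ≤ k := by exact_mod_cast hk
  exact div_pos pi_pos (by linarith)

lemma pi_div_two_mul_sub_one_le_pi (hk : 1 ≤ k) : π / (2 * (k : ℝ) - 1) ≤ π := by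
  have : (1 : ℝ) ≤ k := by exact_mod_cast hk
  exact div_le_self pi_pos.le (by linarith)

lemma two_mul_add_one_mul_pi_div_two_mul_sub_one_le (hk : 1 ≤ k) :
    (2 * (k : ℝ) + 1) * (π / (2 * (k : ℝ) - 1)) ≤ 3 * π := by
  have : (1 : ℝ) ≤ k := by exact_mod_cast hk
  rw [mul_div_assoc', div_le_iff₀ (by linarith)]
  nlinarith [pi_pos]

lemma cos_pi_div_two_mul_sub_one_lt_one (hk : 1 ≤ k) : cos (π / (2 * (k : ℝ) - 1)) < 1 := by
  simpa using cos_lt_cos_of_nonneg_of_le_pi le_rfl (pi_div_two_mul_sub_one_le_pi hk)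
    (pi_div_two_mul_sub_one_pos hk)

end Angles

section SuccessProbability

variable {k : ℕ} {φ ψ lam : ℝ}

lemma one_sub_grovP_eq (h0 : 0 < lam) (h1 : lam < 1) (hφ : cos φ < 1) :
    1 - grovP k φ lam =
      (1 - lam) * (1 + cos ((2 * (k : ℝ) + 1) * grovDelta φ lam)) / (2 - lam * (1 - cos φ)) := by
  have hc : 0 < lam * (1 - cos φ) := mul_pos h0 (by linarith)
  have hc2 := mul_one_sub_cos_lt_two φ h0.le h1
  have hsinθ : sin (arcsin √lam) ^ 2 = lam := by
    rw [sin_arcsin (by linarith [sqrt_nonneg lam]) (sqrt_le_one.mpr h1.le), sq_sqrt h0.le]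
  have hcosδ : cos (grovDelta φ lam) = 1 - lam * (1 - cos φ) :=
    cos_arccos (by linarith) (by linarith)
  have hsinδ : sin (grovDelta φ lam) ^ 2 = lam * (1 - cos φ) * (2 - lam * (1 - cos φ)) := by
    rw [sin_sq, hcosδ]; ring
  dsimp only [grovP]
  change 1 - (sin (arcsin √lam) ^ 2 / sin (grovDelta φ lam) ^ 2 * (cos φ - cos (grovDelta φ lam)) *
    cos ((2 * (k : ℝ) + 1) * grovDelta φ lam) + sin (arcsin √lam) ^ 2 / sin (grovDelta φ lam) ^ 2 *
    (1 - cos φ * cos (grovDelta φ lam))) = _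
  rw [hsinθ, hsinδ, hcosδ]
  have hne : 2 - lam * (1 - cos φ) ≠ 0 := by linarith
  field_simp [hc.ne', hne, h0.ne', (by linarith : 1 - cos φ ≠ 0)]
  ring

lemma continuousOn_grovP (hφ : cos φ < 1) : ContinuousOn (grovP k φ) (Ioo 0 1) := by
  have hden : ∀ lam ∈ Ioo (0 : ℝ) 1, 2 - lam * (1 - cos φ) ≠ 0 := fun lam hlam =>
    (sub_pos.mpr (mul_one_sub_cos_lt_two φ hlam.1.le hlam.2)).ne'
  have hcont : ContinuousOn (fun lam => 1 - (1 - lam) *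
      (1 + cos ((2 * (k : ℝ) + 1) * grovDelta φ lam)) / (2 - lam * (1 - cos φ))) (Ioo 0 1) := by
    unfold grovDelta
    fun_prop (disch := exact hden)
  refine hcont.congr fun lam hlam => ?_
  dsimp only
  rw [← one_sub_grovP_eq hlam.1 hlam.2 hφ, sub_sub_cancel]

lemma grovP_eq_one (h0 : 0 < lam) (h1 : lam < 1) (hφ : cos φ < 1)
    (h : cos ((2 * (k : ℝ) + 1) * grovDelta φ lam) = -1) : grovP k φ lam = 1 := by
  have := one_sub_grovP_eq (k := k) h0 h1 hφ
  rw [h, add_neg_cancel, mul_zero, zero_div] at this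
  linarith

lemma grovP_lt_one (h0 : 0 < lam) (h1 : lam < 1) (hφ : cos φ < 1)
    (h3π : (2 * (k : ℝ) + 1) * grovDelta φ lam < 3 * π)
    (hπ : (2 * (k : ℝ) + 1) * grovDelta φ lam ≠ π) : grovP k φ lam < 1 := by
  have hcos : -1 < cos ((2 * (k : ℝ) + 1) * grovDelta φ lam) := neg_one_lt_cos_of_ne_pi
    (mul_nonneg (by positivity) (arccos_nonneg _)) h3π hπ
  have hpos : 0 < (1 - lam) * (1 + cos ((2 * (k : ℝ) + 1) * grovDelta φ lam)) /
      (2 - lam * (1 - cos φ)) :=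
    div_pos (mul_pos (by linarith) (by linarith))
      (sub_pos.mpr (mul_one_sub_cos_lt_two φ h0.le h1))
  linarith [one_sub_grovP_eq (k := k) h0 h1 hφ]

lemma grovDelta_lt_grovDelta (h0 : 0 < lam) (h1 : lam < 1) (h : cos φ < cos ψ) :
    grovDelta ψ lam < grovDelta φ lam :=
  arccos_lt_arccos (by linarith [mul_one_sub_cos_lt_two φ h0.le h1])
    (by nlinarith) (by nlinarith [cos_le_one ψ])

end SuccessProbability


section Endpoints

variable {k : ℕ} {φ ψ : ℝ}

lemma lamMax_pos (hφ : cos φ < 1) : 0 < lamMax k φ :=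
  div_pos (by linarith [cos_pi_div_two_mul_add_one_lt_one k]) (by linarith)

lemma lamMax_lt_one (hφ : cos φ < cos (π / (2 * (k : ℝ) + 1))) : lamMax k φ < 1 :=
  (div_lt_one (by linarith [cos_pi_div_two_mul_add_one_lt_one k])).mpr (by linarith)

lemma lamMax_lt_lamMax (h : cos φ < cos ψ) (hψ : cos ψ < 1) : lamMax k φ < lamMax k ψ :=
  div_lt_div_of_pos_left (by linarith [cos_pi_div_two_mul_add_one_lt_one k]) (by linarith)
    (by linarith)

lemma grovDelta_lamMax (hφ : cos φ < 1) : grovDelta φ (lamMax k φ) = π / (2 * (k : ℝ) + 1) := by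
  rw [grovDelta, lamMax, div_mul_cancel₀ _ (by linarith), sub_sub_cancel]
  exact arccos_cos (pi_div_two_mul_add_one_pos k).le (pi_div_two_mul_add_one_le_pi k)

lemma two_mul_add_one_mul_grovDelta_lamMax (hφ : cos φ < 1) :
    (2 * (k : ℝ) + 1) * grovDelta φ (lamMax k φ) = π := by
  rw [grovDelta_lamMax hφ, mul_div_cancel₀ _ (by positivity)]

lemma grovP_lamMax (hφ : cos φ < cos (π / (2 * (k : ℝ) + 1))) : grovP k φ (lamMax k φ) = 1 := by
  have hφ1 := hφ.trans (cos_pi_div_two_mul_add_one_lt_one k)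
  refine grovP_eq_one (lamMax_pos hφ1) (lamMax_lt_one hφ) hφ1 ?_
  rw [two_mul_add_one_mul_grovDelta_lamMax hφ1, cos_pi]

lemma grovP_lamMax_lt_one_of_cos_lt (h : cos φ < cos ψ)
    (hψ : cos ψ < cos (π / (2 * (k : ℝ) + 1))) : grovP k ψ (lamMax k φ) < 1 := by
  have hψ1 := hψ.trans (cos_pi_div_two_mul_add_one_lt_one k)
  have h0 := lamMax_pos (k := k) (h.trans hψ1)
  have h1 := lamMax_lt_one (h.trans hψ)
  have hlt : (2 * (k : ℝ) + 1) * grovDelta ψ (lamMax k φ) < π := by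
    rw [← two_mul_add_one_mul_grovDelta_lamMax (k := k) (h.trans hψ1)]
    exact mul_lt_mul_of_pos_left (grovDelta_lt_grovDelta h0 h1 h) (by positivity)
  exact grovP_lt_one h0 h1 hψ1 (by linarith [pi_pos]) hlt.ne

lemma grovP_lamMax_lt_one_of_cos_gt (hk : 1 ≤ k) (h : cos ψ < cos φ)
    (hφ : cos φ < cos (π / (2 * (k : ℝ) + 1)))
    (h2 : 2 * lamMax k φ < 1 - cos (π / (2 * (k : ℝ) - 1))) : grovP k ψ (lamMax k φ) < 1 := by
  have hφ1 := hφ.trans (cos_pi_div_two_mul_add_one_lt_one k)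
  have h0 := lamMax_pos (k := k) hφ1
  have h1 := lamMax_lt_one hφ
  have hgt : π < (2 * (k : ℝ) + 1) * grovDelta ψ (lamMax k φ) := by
    rw [← two_mul_add_one_mul_grovDelta_lamMax (k := k) hφ1]
    exact mul_lt_mul_of_pos_left (grovDelta_lt_grovDelta h0 h1 h) (by positivity)
  have hβ : grovDelta ψ (lamMax k φ) < π / (2 * (k : ℝ) - 1) := by
    rw [← arccos_cos (pi_div_two_mul_sub_one_pos hk).le (pi_div_two_mul_sub_one_le_pi hk)]
    refine arccos_lt_arccos (neg_one_le_cos _) ?_ (by nlinarith [cos_le_one ψ])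
    nlinarith [neg_one_le_cos ψ]
  have h3π : (2 * (k : ℝ) + 1) * grovDelta ψ (lamMax k φ) < 3 * π :=
    (mul_lt_mul_of_pos_left hβ (by positivity)).trans_le
      (two_mul_add_one_mul_pi_div_two_mul_sub_one_le hk)
  exact grovP_lt_one h0 h1 (h.trans hφ1) h3π hgt.ne'

end Endpoints

section PhiMin

variable {k : ℕ} {φ : ℝ}

lemma cos_lt_cos_of_phiMin_lt (hk : 1 ≤ k) (h : phiMin k < φ) (hφ : φ ≤ π) :
    cos φ < cos (π / (2 * (k : ℝ) + 1)) := by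
  have hlt := cos_lt_of_arccos_lt hφ h
  have hβ := cos_pi_div_two_mul_sub_one_lt_one hk
  have hle : 1 - cos (π / (2 * (k : ℝ) + 1)) ≤
      (2 - 2 * cos (π / (2 * (k : ℝ) + 1))) / (1 - cos (π / (2 * (k : ℝ) - 1))) := by
    rw [le_div_iff₀ (by linarith)]
    nlinarith [neg_one_le_cos (π / (2 * (k : ℝ) - 1)), cos_pi_div_two_mul_add_one_lt_one k]
  linarith

lemma two_mul_lamMax_lt_of_phiMin_lt (hk : 1 ≤ k) (h : phiMin k < φ) (hφ : φ ≤ π) :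
    2 * lamMax k φ < 1 - cos (π / (2 * (k : ℝ) - 1)) := by
  have hφ1 := (cos_lt_cos_of_phiMin_lt hk h hφ).trans (cos_pi_div_two_mul_add_one_lt_one k)
  have hlt : (2 - 2 * cos (π / (2 * (k : ℝ) + 1))) / (1 - cos (π / (2 * (k : ℝ) - 1))) <
      1 - cos φ := by linarith [cos_lt_of_arccos_lt hφ h]
  rw [div_lt_iff₀ (by linarith [cos_pi_div_two_mul_sub_one_lt_one hk])] at hlt
  rw [lamMax, mul_div_assoc', div_lt_iff₀ (by linarith)]
  linarith

end PhiMin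

/-- For k ≥ 1 and phases φ₁, φ₂ with φ_k^min < φ₂ < φ₁ ≤ π, there
exists λ with λ_{k,1}^{φ₁,max} < λ < λ_{k,1}^{φ₂,max} such that
P_k^{φ₁}(λ) = P_k^{φ₂}(λ), where λ_{k,1}^{φ,max} = (1 − cos(π/(2k+1)))/(1 − cos φ). -/
theorem intersection_point_of_two_phases
    (k : ℕ) (hk : 1 ≤ k) (φ₁ φ₂ : ℝ)
    (h₁ : phiMin k < φ₂) (h₂ : φ₂ < φ₁) (h₃ : φ₁ ≤ Real.pi) :
    ∃ lam : ℝ,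
      (1 - Real.cos (Real.pi / (2 * (k : ℝ) + 1))) / (1 - Real.cos φ₁) < lam ∧
      lam < (1 - Real.cos (Real.pi / (2 * (k : ℝ) + 1))) / (1 - Real.cos φ₂) ∧
      grovP k φ₁ lam = grovP k φ₂ lam := by
  have hφ₂π : φ₂ ≤ π := (h₂.trans_le h₃).le
  have hcos₁₂ : cos φ₁ < cos φ₂ :=
    cos_lt_cos_of_nonneg_of_le_pi ((arccos_nonneg _).trans h₁.le) h₃ h₂
  have hcos₂ := cos_lt_cos_of_phiMin_lt hk h₁ hφ₂π
  have hcos₁ := hcos₁₂.trans hcos₂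
  have hα := cos_pi_div_two_mul_add_one_lt_one k
  have hab : lamMax k φ₁ < lamMax k φ₂ := lamMax_lt_lamMax hcos₁₂ (hcos₂.trans hα)
  have hsub : Icc (lamMax k φ₁) (lamMax k φ₂) ⊆ Ioo 0 1 := Icc_subset_Ioo
    (lamMax_pos (hcos₁.trans hα)) (lamMax_lt_one hcos₂)
  have hcont := ((continuousOn_grovP (k := k) (hcos₁.trans hα)).sub
    (continuousOn_grovP (k := k) (hcos₂.trans hα))).mono hsub
  have hleft : grovP k φ₂ (lamMax k φ₁) < grovP k φ₁ (lamMax k φ₁) := by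
    rw [grovP_lamMax hcos₁]; exact grovP_lamMax_lt_one_of_cos_lt hcos₁₂ hcos₂
  have hright : grovP k φ₁ (lamMax k φ₂) < grovP k φ₂ (lamMax k φ₂) := by
    rw [grovP_lamMax hcos₂]
    exact grovP_lamMax_lt_one_of_cos_gt hk hcos₁₂ hcos₂
      (two_mul_lamMax_lt_of_phiMin_lt hk h₁ hφ₂π)
  obtain ⟨lam, hlam, hzero⟩ := intermediate_value_Ioo' hab.le hcont
    ⟨sub_neg.mpr hright, sub_pos.mpr hleft⟩
  exact ⟨lam, hlam.1, hlam.2, sub_eq_zero.mp hzero⟩
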